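/- For every z ∈ ℂ with Im z > 0, exp( (1/(2πi)) Σ_{j=1}^m (log s_j) ∫_{x_{j−1}}^{x_j} (u−z)^{−1} du ) = ∏_{j=0}^m (z−x_j)^{β_j}, where the complex powers are principal. That is, the Szegő-type function D defined by the exponential of the Cauchy integral coincides with the finite product of principal complex powers. -/

import Mathlib

open Complex Finset

lemma log_neg_of_im_pos' {w : ℂ} (hw : 0 < w.im) :
    Complex.log (-w) = Complex.log w - Real.pi * Complex.I := by
  apply Complex.ext
  · simp [Complex.log_re]
  · simp [Complex.log_im, Complex.arg_neg_eq_arg_sub_pi_of_im_pos hw]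

lemma integral_inv_sub' (z : ℂ) (hz : z.im ≠ 0) (a b : ℝ) :
    ∫ t in a..b, ((t : ℂ) - z)⁻¹
      = Complex.log ((b : ℂ) - z) - Complex.log ((a : ℂ) - z) := by
  have hne : ∀ t : ℝ, (t : ℂ) - z ≠ 0 := by
    intro t h
    apply hz
    have := congrArg Complex.im h
    simpa using this.symm
  apply intervalIntegral.integral_eq_sub_of_hasDerivAt
  · intro t _
    have hslit : ((t : ℂ) - z) ∈ Complex.slitPlane := by
      refine Or.inr ?_
      simp only [Complex.sub_im, Complex.ofReal_im, zero_sub, neg_ne_zero]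
      exact hz
    have h1 : HasDerivAt (fun w : ℂ => Complex.log (w - z)) (((t : ℂ) - z)⁻¹) (t : ℂ) := by
      simpa [Function.comp_def] using (Complex.hasDerivAt_log hslit).comp (t : ℂ)
        ((hasDerivAt_id ((t : ℂ))).sub_const z)
    simpa using h1.comp_ofReal
  · exact (Continuous.intervalIntegrable
      ((Complex.continuous_ofReal.sub continuous_const).inv₀ hne) a b)

lemma abel_sum' (m : ℕ) (a L : ℕ → ℂ) :
    ∑ j ∈ Finset.Icc 1 m, a j * (L j - L (j - 1))
      = ∑ j ∈ Finset.Icc 0 m, (a j - a (j + 1)) * L j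
        + a (m + 1) * L m - a 0 * L 0 := by
  induction m with
  | zero => simp [Finset.Icc_self]; ring
  | succ n ih =>
    rw [Finset.sum_Icc_succ_top (by omega : 1 ≤ n + 1),
        Finset.sum_Icc_succ_top (Nat.zero_le _), ih]
    simp only [Nat.add_sub_cancel]
    ring

/-- `β_j = (1/(2πi)) log(s_j/s_{j+1})`. -/
noncomputable def betaCoef (s : ℕ → ℝ) (j : ℕ) : ℂ :=
  1 / (2 * ↑Real.pi * Complex.I) * ↑(Real.log (s j / s (j + 1)))

theorem szego_function_eq_product
    (m : ℕ) (hm : 1 ≤ m) (x s : ℕ → ℝ)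
    (hx : ∀ j, j < m → x j < x (j + 1))
    (hs : ∀ j, 1 ≤ j → j ≤ m → 0 < s j)
    (hs0 : s 0 = 1) (hsm : s (m + 1) = 1)
    (z : ℂ) (hz : 0 < z.im) :
    Complex.exp (1 / (2 * ↑Real.pi * Complex.I) *
        ∑ j ∈ Finset.Icc 1 m,
          (↑(Real.log (s j)) : ℂ) * ∫ t in (x (j - 1))..(x j), ((↑t : ℂ) - z)⁻¹)
      = ∏ j ∈ Finset.Icc 0 m, (z - ↑(x j)) ^ betaCoef s j := by
  set c : ℂ := 1 / (2 * ↑Real.pi * Complex.I) with hc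
  have hIcc : Finset.Icc 0 m = Finset.range (m + 1) := by
    rw [← Nat.Ico_zero_eq_range, Finset.Ico_add_one_right_eq_Icc]
  have hspos : ∀ j, j ≤ m + 1 → 0 < s j := by
    intro j hj
    rcases Nat.eq_zero_or_pos j with rfl | hj1
    · rw [hs0]; norm_num
    · rcases eq_or_lt_of_le hj with rfl | hj2
      · rw [hsm]; norm_num
      · exact hs j hj1 (by omega)
  set a : ℕ → ℂ := fun j => ((Real.log (s j) : ℝ) : ℂ) with ha
  set L : ℕ → ℂ := fun j => Complex.log ((x j : ℂ) - z) with hL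
  have ha0 : a 0 = 0 := by simp [ha, hs0]
  have ham : a (m + 1) = 0 := by simp [ha, hsm]
  have hzx : ∀ j : ℕ, (z - (x j : ℂ)) ≠ 0 := by
    intro j h
    have := congrArg Complex.im h
    simp at this
    exact absurd this hz.ne'
  have hzxim : ∀ j : ℕ, 0 < (z - (x j : ℂ)).im := by
    intro j; simpa using hz
  have hLj : ∀ j : ℕ, L j = Complex.log (z - (x j : ℂ)) - Real.pi * Complex.I := by
    intro j
    have := log_neg_of_im_pos' (hzxim j)
    rw [neg_sub] at this
    simpa [hL] using this
  have hint : ∀ j ∈ Finset.Icc 1 m,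
      (↑(Real.log (s j)) : ℂ) * ∫ t in (x (j - 1))..(x j), ((↑t : ℂ) - z)⁻¹
        = a j * (L j - L (j - 1)) := by
    intro j _
    rw [integral_inv_sub' z hz.ne' _ _]
  rw [Finset.sum_congr rfl hint, abel_sum', ha0, ham]
  simp only [zero_mul, add_zero, sub_zero]
  have hβ : ∀ j ∈ Finset.Icc 0 m, betaCoef s j = c * (a j - a (j + 1)) := by
    intro j hj
    simp only [Finset.mem_Icc] at hj
    unfold betaCoef
    rw [Real.log_div (hspos j (by omega)).ne' (hspos (j + 1) (by omega)).ne']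
    push_cast
    ring
  have hRHS : ∏ j ∈ Finset.Icc 0 m, (z - (x j : ℂ)) ^ betaCoef s j
      = Complex.exp (∑ j ∈ Finset.Icc 0 m, betaCoef s j * Complex.log (z - (x j : ℂ))) := by
    rw [Complex.exp_sum]
    refine Finset.prod_congr rfl fun j _ => ?_
    rw [Complex.cpow_def_of_ne_zero (hzx j), mul_comm]
  rw [hRHS]
  congr 1
  have htel : ∑ j ∈ Finset.Icc 0 m, (a j - a (j + 1)) = 0 := by
    rw [hIcc, Finset.sum_range_sub' a, ha0, ham, sub_zero]
  calc c * ∑ j ∈ Finset.Icc 0 m, (a j - a (j + 1)) * L j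
      = ∑ j ∈ Finset.Icc 0 m,
          ((c * (a j - a (j + 1))) * Complex.log (z - (x j : ℂ))
            - (Real.pi * Complex.I * c) * (a j - a (j + 1))) := by
        rw [Finset.mul_sum]
        refine Finset.sum_congr rfl fun j _ => ?_
        rw [hLj j]; ring
    _ = ∑ j ∈ Finset.Icc 0 m, (c * (a j - a (j + 1))) * Complex.log (z - (x j : ℂ))
          - (Real.pi * Complex.I * c) * ∑ j ∈ Finset.Icc 0 m, (a j - a (j + 1)) := by
        rw [Finset.sum_sub_distrib, Finset.mul_sum]
    _ = ∑ j ∈ Finset.Icc 0 m, betaCoef s j * Complex.log (z - (x j : ℂ)) := by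
        rw [htel, mul_zero, sub_zero]
        exact Finset.sum_congr rfl fun j hj => by rw [hβ j hj]
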